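/- arXiv:2505.08594 — 3 statements merged into one kernel-verified Lean document; each statement's English description precedes it below -/
import Mathlib

section
/- Define f_B(B) = ((p+ν)/n)∑_{i=1}^n log(1 + (h_i + tr(B G_i))/ν) + tr(B R) + ρ‖B‖_F² + (ρ/2)·1_rᵀBBᵀ1_r, and f_B^S(B; B₀) = tr(B H₀) + ρ‖B‖_F² + (ρ/2)·1_rᵀBBᵀ1_r + C(B₀), where H₀ = R + ((p+ν)/n)∑_i G_i/(h_i + tr(B₀G_i) + ν) and C(B₀) is chosen so that f_B^S(B₀;B₀) = f_B(B₀). Then f_B^S(B;B₀) ≥ f_B(B) for all B with h_i + tr(B G_i) > -ν for all i. -/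
/-! Only the logarithmic term of `f_B` is not already linear-plus-`quad`, and `log` is concave:
each `log (1 + (h i + tr (B G i)) / ν)` lies below its tangent line at `B₀`, whose slope is
`(h i + tr (B₀ G i) + ν)⁻¹`. Summing these tangent bounds gives exactly the linear term
`tr (B H₀)` of the surrogate, and the constant `C(B₀)` makes both sides agree at `B₀`. -/

open Matrix BigOperators

theorem Real.log_le_log_add_sub_div {a b : ℝ} (ha : 0 < a) (hb : 0 < b) :
    Real.log b ≤ Real.log a + (b - a) / a := by
  have hquot := Real.log_le_sub_one_of_pos (div_pos hb ha)
  rw [Real.log_div hb.ne' ha.ne'] at hquot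
  have : b / a - 1 = (b - a) / a := by field_simp
  linarith

theorem Real.log_one_add_div_le {ν x y : ℝ} (hν : 0 < ν) (hx : -ν < x) (hy : -ν < y) :
    Real.log (1 + y / ν) ≤ Real.log (1 + x / ν) + (x + ν)⁻¹ * (y - x) := by
  have hslope : (1 + y / ν - (1 + x / ν)) / (1 + x / ν) = (x + ν)⁻¹ * (y - x) := by
    rw [one_add_div hν.ne', one_add_div hν.ne', ← sub_div, div_div_div_cancel_right₀ hν.ne',
      div_eq_inv_mul, add_comm ν x]
    ring
  rw [← hslope]
  apply Real.log_le_log_add_sub_div <;>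
  · rw [one_add_div hν.ne']
    exact div_pos (by linarith) hν

theorem Matrix.trace_mul_add_smul_sum {m l ι α : Type*} [Fintype m] [Fintype l] [Fintype ι]
    [CommSemiring α] (X : Matrix m l α) (R : Matrix l m α) (c : α) (w : ι → α)
    (G : ι → Matrix l m α) :
    (X * (R + c • ∑ i, w i • G i)).trace = (X * R).trace + c * ∑ i, w i * (X * G i).trace := by
  simp only [Matrix.mul_add, Matrix.mul_smul, Matrix.mul_sum, Matrix.trace_add,
    Matrix.trace_smul, Matrix.trace_sum, smul_eq_mul]

theorem surrogate_majorizes_fB_general (p n r k : ℕ) (ν ρ : ℝ) (hν : 0 < ν)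
    (h : Fin n → ℝ) (G : Fin n → Matrix (Fin k) (Fin r) ℝ)
    (R : Matrix (Fin k) (Fin r) ℝ) (B B₀ : Matrix (Fin r) (Fin k) ℝ)
    (hB₀ : ∀ i, -ν < h i + (B₀ * G i).trace)
    (hB : ∀ i, -ν < h i + (B * G i).trace) :
    let quad : Matrix (Fin r) (Fin k) ℝ → ℝ := fun X =>
      ρ * (Xᵀ * X).trace + ρ / 2 * ((fun _ => (1 : ℝ)) ⬝ᵥ ((X * Xᵀ) *ᵥ (fun _ => (1 : ℝ))))
    let fB : Matrix (Fin r) (Fin k) ℝ → ℝ := fun X =>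
      ((p + ν) / n) * ∑ i, Real.log (1 + (h i + (X * G i).trace) / ν) + (X * R).trace + quad X
    let H₀ := R + (((p + ν) / n) • ∑ i, (h i + (B₀ * G i).trace + ν)⁻¹ • G i)
    let fBS : Matrix (Fin r) (Fin k) ℝ → ℝ := fun X =>
      (X * H₀).trace + quad X + (fB B₀ - ((B₀ * H₀).trace + quad B₀))
    fB B ≤ fBS B := by
  intro quad fB H₀ fBS
  set c : ℝ := (p + ν) / n
  set w : Fin n → ℝ := fun i => (h i + (B₀ * G i).trace + ν)⁻¹
  have htangent : ∑ i, Real.log (1 + (h i + (B * G i).trace) / ν)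
      ≤ ∑ i, Real.log (1 + (h i + (B₀ * G i).trace) / ν)
        + (∑ i, w i * (B * G i).trace - ∑ i, w i * (B₀ * G i).trace) := by
    simp only [← Finset.sum_sub_distrib, ← Finset.sum_add_distrib, ← mul_sub]
    refine Finset.sum_le_sum fun i _ => ?_
    have := Real.log_one_add_div_le hν (hB₀ i) (hB i)
    rwa [add_sub_add_left_eq_sub] at this
  have hc : 0 ≤ c := by positivity
  have hB_H₀ := Matrix.trace_mul_add_smul_sum B R c w G
  have hB₀_H₀ := Matrix.trace_mul_add_smul_sum B₀ R c w G
  simp only [fBS, fB, H₀]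
  rw [hB_H₀, hB₀_H₀]
  linarith [mul_le_mul_of_nonneg_left htangent hc]

theorem surrogate_majorizes_fB (p n r k : ℕ) (ν ρ : ℝ) (hν : 0 < ν) (hρ : 0 < ρ)
    (h : Fin n → ℝ) (G : Fin n → Matrix (Fin k) (Fin r) ℝ)
    (R : Matrix (Fin k) (Fin r) ℝ) (B B₀ : Matrix (Fin r) (Fin k) ℝ)
    (hB₀ : ∀ i, -ν < h i + (B₀ * G i).trace)
    (hB : ∀ i, -ν < h i + (B * G i).trace) :
    let quad : Matrix (Fin r) (Fin k) ℝ → ℝ := fun X =>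
      ρ * (Xᵀ * X).trace + ρ / 2 * ((fun _ => (1 : ℝ)) ⬝ᵥ ((X * Xᵀ) *ᵥ (fun _ => (1 : ℝ))))
    let fB : Matrix (Fin r) (Fin k) ℝ → ℝ := fun X =>
      ((p + ν) / n) * ∑ i, Real.log (1 + (h i + (X * G i).trace) / ν) + (X * R).trace + quad X
    let H₀ := R + (((p + ν) / n) • ∑ i, (h i + (B₀ * G i).trace + ν)⁻¹ • G i)
    let fBS : Matrix (Fin r) (Fin k) ℝ → ℝ := fun X =>
      (X * H₀).trace + quad X + (fB B₀ - ((B₀ * H₀).trace + quad B₀))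
    fB B ≤ fBS B :=
  surrogate_majorizes_fB_general p n r k ν ρ hν h G R B B₀ hB₀ hB
end

section
/- Let x₀ ∈ ℝ^n and α ∈ ℝ be such that, setting x* = max(0, x₀ + α·1) componentwise, we have ∑ᵢ x*ᵢ = 1. Then x* is the Euclidean projection of x₀ onto the probability simplex {x ≥ 0 : ∑ᵢ xᵢ = 1}. -/
/-!
Thresholding is the KKT point of the projection: with `x = max 0 (x₀ + α)`, the vector
`x - x₀ - α` is nonnegative, vanishes wherever `x` is positive, and hence
`⟪x - x₀, y - x⟫ ≥ α ∑ (y - x) = 0` for every `y` in the simplex.  Expanding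
`‖y - x₀‖² = ‖x - x₀‖² + 2⟪x - x₀, y - x⟫ + ‖y - x‖²` gives minimality.
-/

open BigOperators

lemma sq_sub_add_two_mul_le_of_eq_max_zero {a α x y : ℝ} (hx : x = max 0 (a + α))
    (hy : 0 ≤ y) : (x - a) ^ 2 + 2 * α * (y - x) ≤ (y - a) ^ 2 := by
  have complementary : 0 ≤ (x - a - α) * (y - x) := by
    rcases le_or_gt (a + α) 0 with h | h
    · rw [hx, max_eq_left h]; nlinarith
    · rw [hx, max_eq_right h.le]; simp
  nlinarith [sq_nonneg (y - x)]

theorem sum_sq_sub_le_of_eq_max_zero {ι : Type*} [Fintype ι] {a x y : ι → ℝ} {α : ℝ}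
    (hx : ∀ i, x i = max 0 (a i + α)) (hy : ∀ i, 0 ≤ y i) (hsum : ∑ i, x i = ∑ i, y i) :
    ∑ i, (x i - a i) ^ 2 ≤ ∑ i, (y i - a i) ^ 2 := by
  have h := Finset.sum_le_sum fun i (_ : i ∈ Finset.univ) ↦
    sq_sub_add_two_mul_le_of_eq_max_zero (hx i) (hy i)
  rwa [Finset.sum_add_distrib, ← Finset.mul_sum, Finset.sum_sub_distrib, hsum, sub_self,
    mul_zero, add_zero] at h

theorem simplex_projection_thresholding (n : ℕ) (x₀ : Fin n → ℝ) (α : ℝ)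
    (x : Fin n → ℝ) (hx : ∀ i, x i = max 0 (x₀ i + α)) (hsum : ∑ i, x i = 1) :
    ∀ y : Fin n → ℝ, (∀ i, 0 ≤ y i) → ∑ i, y i = 1 →
      ∑ i, (x i - x₀ i) ^ 2 ≤ ∑ i, (y i - x₀ i) ^ 2 :=
  fun _ hy hysum ↦ sum_sq_sub_le_of_eq_max_zero hx hy (hsum.trans hysum.symm)
end

section
/- Let C ∈ ℝ^{p×p} be symmetric with eigendecomposition C = UΛUᵀ, Λ = Diag(λ₁,…,λ_p), ρ > 0, and let X* = (1/(2ρ))·U(Λ + (Λ² + 4ρI)^{1/2})Uᵀ. Then X* is the unique positive definite minimizer of F(X) = −log det X + (ρ/2)‖X − (1/ρ)C‖_F² over symmetric positive definite matrices X, i.e., it satisfies the stationarity condition −X*^{-1} + ρX* − C = 0. -/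
open Matrix BigOperators
set_option linter.unusedSectionVars false

section helpers

variable {n : Type*} [Fintype n] [DecidableEq n]

lemma aux_conj_posDef {A B : Matrix n n ℝ} (hA : A.PosDef) (hB : IsUnit B.det) :
    (Bᵀ * A * B).PosDef := by
  simpa using hA.conjTranspose_mul_mul_same (B := B)
    ((Matrix.mulVec_injective_iff_isUnit (A := B)).mpr ((Matrix.isUnit_iff_isUnit_det B).mpr hB))

lemma aux_trace_eq_sum_eigenvalues {A : Matrix n n ℝ} (hA : A.IsHermitian) :
    A.trace = ∑ i, hA.eigenvalues i := by
  rw [hA.trace_eq_sum_eigenvalues]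
  simp

lemma aux_log_det_le {M : Matrix n n ℝ} (hM : M.PosDef) :
    Real.log M.det ≤ M.trace - Fintype.card n := by
  have hdet : M.det = ∏ i, hM.isHermitian.eigenvalues i := by
    simpa using hM.isHermitian.det_eq_prod_eigenvalues
  have hpos : ∀ i, 0 < hM.isHermitian.eigenvalues i := hM.eigenvalues_pos
  rw [hdet, aux_trace_eq_sum_eigenvalues hM.isHermitian,
    Real.log_prod (fun i _ => (hpos i).ne')]
  have : ∀ i ∈ Finset.univ, Real.log (hM.isHermitian.eigenvalues i)
      ≤ hM.isHermitian.eigenvalues i - 1 :=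
    fun i _ => Real.log_le_sub_one_of_pos (hpos i)
  calc ∑ i, Real.log (hM.isHermitian.eigenvalues i)
      ≤ ∑ i, (hM.isHermitian.eigenvalues i - 1) := Finset.sum_le_sum this
    _ = ∑ i, hM.isHermitian.eigenvalues i - Fintype.card n := by
        rw [Finset.sum_sub_distrib]; simp

open scoped MatrixOrder in
lemma aux_log_det_le' {X Y : Matrix n n ℝ} (hX : X.PosDef) (hY : Y.PosDef) :
    Real.log Y.det ≤ Real.log X.det + (X⁻¹ * Y).trace - Fintype.card n := by
  have hXi : (X⁻¹).PosDef := hX.inv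
  set S := CFC.sqrt (X⁻¹) with hS
  have hSS : S * S = X⁻¹ := CFC.sqrt_mul_sqrt_self _ hXi.posSemidef.nonneg
  have hSH : Sᵀ = S := by
    have := (CFC.sqrt_nonneg (X⁻¹)).posSemidef.isHermitian
    rwa [Matrix.IsHermitian, conjTranspose_eq_transpose_of_trivial] at this
  have hdetS : IsUnit S.det := by
    have h2 : S.det * S.det = (X⁻¹).det := by rw [← Matrix.det_mul, hSS]
    have : (X⁻¹).det ≠ 0 := hXi.det_pos.ne'
    exact isUnit_iff_ne_zero.mpr (fun h => this (by rw [← h2, h, mul_zero]))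
  have hM : (Sᵀ * Y * S).PosDef := aux_conj_posDef hY hdetS
  have hle := aux_log_det_le hM
  have hdet : (Sᵀ * Y * S).det = (X⁻¹).det * Y.det := by
    rw [Matrix.det_mul, Matrix.det_mul, Matrix.det_transpose, ← hSS, Matrix.det_mul]
    ring
  have htr : (Sᵀ * Y * S).trace = (X⁻¹ * Y).trace := by
    rw [Matrix.trace_mul_cycle, hSH, hSS]
  rw [hdet, htr] at hle
  have hXd : (0:ℝ) < X.det := hX.det_pos
  have hYd : (0:ℝ) < Y.det := hY.det_pos
  have hXinvdet : (X⁻¹).det = (X.det)⁻¹ := by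
    rw [Matrix.det_nonsing_inv, Ring.inverse_eq_inv']
  rw [hXinvdet, Real.log_mul (by positivity) hYd.ne', Real.log_inv] at hle
  linarith

lemma aux_trace_sq_pos {Δ : Matrix n n ℝ} (h : Δ ≠ 0) : 0 < (Δᵀ * Δ).trace := by
  have he : (Δᵀ * Δ).trace = ∑ j, ∑ i, (Δ i j)^2 := by
    simp [Matrix.trace, Matrix.diag, Matrix.mul_apply, pow_two]
  rw [he]
  obtain ⟨i, j, hij⟩ : ∃ i j, Δ i j ≠ 0 := by
    by_contra hc
    push_neg at hc
    exact h (Matrix.ext fun i j => hc i j)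
  refine Finset.sum_pos' (fun j _ => Finset.sum_nonneg fun i _ => sq_nonneg _) ⟨j, Finset.mem_univ _, ?_⟩
  exact Finset.sum_pos' (fun i _ => sq_nonneg _) ⟨i, Finset.mem_univ _, by positivity⟩

end helpers

theorem L_update_closed_form (p : ℕ) (ρ : ℝ) (hρ : 0 < ρ)
    (U : Matrix (Fin p) (Fin p) ℝ) (hU : U * Uᵀ = 1)
    (lam : Fin p → ℝ) (C : Matrix (Fin p) (Fin p) ℝ)
    (hC : C = U * Matrix.diagonal lam * Uᵀ) :
    let X := (1 / (2 * ρ)) • (U * (Matrix.diagonal lam +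
      Matrix.diagonal (fun i => Real.sqrt ((lam i) ^ 2 + 4 * ρ))) * Uᵀ)
    let F : Matrix (Fin p) (Fin p) ℝ → ℝ := fun Y =>
      -Real.log Y.det + ρ / 2 * ((Y - ρ⁻¹ • C)ᵀ * (Y - ρ⁻¹ • C)).trace
    X.PosDef ∧ (-X⁻¹ + ρ • X - C = 0) ∧
    (∀ Y : Matrix (Fin p) (Fin p) ℝ, Y.PosDef → Y ≠ X → F X < F Y) := by
  intro X F
  set s : Fin p → ℝ := fun i => Real.sqrt ((lam i) ^ 2 + 4 * ρ) with hs
  set d : Fin p → ℝ := (1 / (2 * ρ)) • (lam + s) with hd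
  have hs2 : ∀ i, (s i) ^ 2 = lam i ^ 2 + 4 * ρ := fun i => Real.sq_sqrt (by positivity)
  have hls : ∀ i, 0 < lam i + s i := by
    intro i
    have h1 : |lam i| < s i := by
      rw [hs, ← Real.sqrt_sq_eq_abs]
      exact Real.sqrt_lt_sqrt (sq_nonneg _) (by linarith)
    have := neg_abs_le (lam i)
    linarith
  have hdpos : ∀ i, 0 < d i := by
    intro i
    have h1 := hls i
    have h2 : (0:ℝ) < 1 / (2 * ρ) := by positivity
    have : d i = 1 / (2 * ρ) * (lam i + s i) := rfl
    rw [this]; positivity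
  have hXeq : X = U * Matrix.diagonal d * Uᵀ := by
    show (1 / (2 * ρ)) • (U * (Matrix.diagonal lam + Matrix.diagonal s) * Uᵀ) = _
    have hadd : Matrix.diagonal (lam + s) = Matrix.diagonal lam + Matrix.diagonal s :=
      (Matrix.diagonal_add lam s).symm
    rw [hd, Matrix.diagonal_smul, hadd, Matrix.mul_smul, Matrix.smul_mul]
  have hUtU : Uᵀ * U = 1 := mul_eq_one_comm.mp hU
  have hdetU : IsUnit U.det := by
    refine IsUnit.of_mul_eq_one Uᵀ.det ?_
    rw [← Matrix.det_mul, hU, Matrix.det_one]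
  have key : ∀ f g : Fin p → ℝ, (U * Matrix.diagonal f * Uᵀ) * (U * Matrix.diagonal g * Uᵀ)
      = U * Matrix.diagonal (f * g) * Uᵀ := by
    intro f g
    have h1 : (U * Matrix.diagonal f * Uᵀ) * (U * Matrix.diagonal g * Uᵀ)
        = U * Matrix.diagonal f * (Uᵀ * U) * Matrix.diagonal g * Uᵀ := by
      simp only [Matrix.mul_assoc]
    rw [h1, hUtU, Matrix.mul_one, Matrix.mul_assoc U, Matrix.diagonal_mul_diagonal]
    rfl
  -- Positive definiteness
  have hXpd : X.PosDef := by
    rw [hXeq]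
    have h := aux_conj_posDef (B := Uᵀ) (Matrix.posDef_diagonal_iff.mpr hdpos)
      (by rw [Matrix.det_transpose]; exact hdetU)
    simpa [Matrix.transpose_transpose] using h
  -- Inverse formula
  have hXinv : X⁻¹ = U * Matrix.diagonal (fun i => (d i)⁻¹) * Uᵀ := by
    apply Matrix.inv_eq_right_inv
    rw [hXeq, key]
    have hone : (d * fun i => (d i)⁻¹) = 1 :=
      funext fun i => mul_inv_cancel₀ (hdpos i).ne'
    have hdone : Matrix.diagonal (1 : Fin p → ℝ) = 1 := Matrix.diagonal_one
    rw [hone, hdone, Matrix.mul_one, hU]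
  -- quadratic identity
  have hquad : ∀ i, ρ * d i - (d i)⁻¹ = lam i := by
    intro i
    have h1 := hs2 i
    have h2 := hls i
    have h3 := hdpos i
    have hdi : d i = 1 / (2 * ρ) * (lam i + s i) := rfl
    have hkey2 : ρ * d i * d i - lam i * d i - 1 = 0 := by
      rw [hdi]; field_simp; nlinarith [h1]
    have h4 : d i ≠ 0 := h3.ne'
    field_simp
    nlinarith [hkey2]
  -- stationarity
  have hstat : -X⁻¹ + ρ • X - C = 0 := by
    rw [hXinv, hXeq, hC]
    have h1 : ρ • (U * Matrix.diagonal d * Uᵀ) = U * Matrix.diagonal (fun i => ρ * d i) * Uᵀ := by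
      have e : Matrix.diagonal (fun i => ρ * d i) = ρ • Matrix.diagonal d :=
        Matrix.diagonal_smul ρ d
      rw [e, Matrix.mul_smul, Matrix.smul_mul]
    rw [h1]
    have e1 : Matrix.diagonal (fun i => -(d i)⁻¹ + ρ * d i - lam i)
        = -(Matrix.diagonal fun i => (d i)⁻¹) + Matrix.diagonal (fun i => ρ * d i)
          - Matrix.diagonal lam := by
      ext i j
      by_cases h : i = j <;> simp [Matrix.diagonal_apply, h]
    have h2 : -(U * Matrix.diagonal (fun i => (d i)⁻¹) * Uᵀ)
        + U * Matrix.diagonal (fun i => ρ * d i) * Uᵀ - U * Matrix.diagonal lam * Uᵀ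
        = U * Matrix.diagonal (fun i => -(d i)⁻¹ + ρ * d i - lam i) * Uᵀ := by
      rw [e1]
      simp only [Matrix.mul_add, Matrix.add_mul, Matrix.mul_sub, Matrix.sub_mul,
        Matrix.mul_neg, Matrix.neg_mul]
    rw [h2]
    have h3 : (fun i => -(d i)⁻¹ + ρ * d i - lam i) = (fun _ : Fin p => (0:ℝ)) := by
      funext i
      have := hquad i
      linarith
    have hdz : Matrix.diagonal (fun _ : Fin p => (0:ℝ)) = 0 := Matrix.diagonal_zero
    rw [h3, hdz, Matrix.mul_zero, Matrix.zero_mul]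
  refine ⟨hXpd, hstat, ?_⟩
  -- minimality
  intro Y hY hYX
  have hXdet : IsUnit X.det := isUnit_iff_ne_zero.mpr hXpd.det_pos.ne'
  have hXsym : Xᵀ = X := by
    have := hXpd.isHermitian
    rwa [Matrix.IsHermitian, conjTranspose_eq_transpose_of_trivial] at this
  have hXinv_eq : X⁻¹ = ρ • X - C := by
    have h : (ρ • X - C) - X⁻¹ = 0 := by rw [← hstat]; abel
    exact (sub_eq_zero.mp h).symm
  set A : Matrix (Fin p) (Fin p) ℝ := ρ⁻¹ • C with hA
  set B : Matrix (Fin p) (Fin p) ℝ := X - A with hB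
  set Δ : Matrix (Fin p) (Fin p) ℝ := Y - X with hΔ
  have hΔne : Δ ≠ 0 := sub_ne_zero.mpr hYX
  have hρB : ρ • B = X⁻¹ := by
    have hAC : ρ • A = C := by
      rw [hA, smul_smul, mul_inv_cancel₀ hρ.ne', one_smul]
    rw [hXinv_eq, hB, smul_sub, hAC]
  have hYA : Y - A = B + Δ := by rw [hB, hΔ]; abel
  have hXiT : (X⁻¹)ᵀ = X⁻¹ := by rw [Matrix.transpose_nonsing_inv, hXsym]
  have f1 : ((Y - A)ᵀ * (Y - A)).trace
      = ((X - A)ᵀ * (X - A)).trace + 2 * (Bᵀ * Δ).trace + (Δᵀ * Δ).trace := by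
    rw [hYA, ← hB]
    have hsw : (Δᵀ * B).trace = (Bᵀ * Δ).trace := by
      rw [← Matrix.trace_transpose (Bᵀ * Δ), Matrix.transpose_mul, Matrix.transpose_transpose]
    simp only [Matrix.transpose_add, Matrix.add_mul, Matrix.mul_add, Matrix.trace_add]
    rw [hsw]; ring
  have f2 : ρ * (Bᵀ * Δ).trace = (X⁻¹ * Y).trace - p := by
    have e1 : ρ * (Bᵀ * Δ).trace = ((ρ • B)ᵀ * Δ).trace := by
      rw [Matrix.transpose_smul, Matrix.smul_mul, Matrix.trace_smul, smul_eq_mul]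
    rw [e1, hρB, hXiT, hΔ, Matrix.mul_sub, Matrix.trace_sub,
      Matrix.nonsing_inv_mul X hXdet, Matrix.trace_one]
    simp
  have f3 : Real.log Y.det ≤ Real.log X.det + (X⁻¹ * Y).trace - p := by
    have := aux_log_det_le' hXpd hY
    simpa using this
  have f4 : 0 < (Δᵀ * Δ).trace := aux_trace_sq_pos hΔne
  have f4' : 0 < ρ / 2 * (Δᵀ * Δ).trace := by positivity
  show -Real.log X.det + ρ / 2 * ((X - A)ᵀ * (X - A)).trace
      < -Real.log Y.det + ρ / 2 * ((Y - A)ᵀ * (Y - A)).trace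
  have f1' : ρ / 2 * ((Y - A)ᵀ * (Y - A)).trace
      = ρ / 2 * ((X - A)ᵀ * (X - A)).trace + ρ * (Bᵀ * Δ).trace
        + ρ / 2 * (Δᵀ * Δ).trace := by rw [f1]; ring
  linarith [f1', f2, f3, f4']
end
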